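/- arXiv:1704.08826 — 3 statements merged into one kernel-verified Lean document; each statement's English description precedes it below -/
import Mathlib

section
/- Every positive integer n can be written as n = P8(x) + 2·P8(y) + 3·P8(z) + 6·P8(t) for some integers x, y, z, t, where P8(x) = 3x² − 2x. -/
/-- A "good" representation: `M = c²+2d²+3r²+6s²` where neither the pair `(c,d)`
nor the pair `(r,s)` is `(0,0)` modulo 3. -/
def GoodRep (M : ℤ) : Prop :=
  ∃ c d r s : ℤ, M = c^2 + 2*d^2 + 3*r^2 + 6*s^2 ∧
    ¬((3:ℤ) ∣ c ∧ (3:ℤ) ∣ d) ∧ ¬((3:ℤ) ∣ r ∧ (3:ℤ) ∣ s)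

lemma goodRep_eq {M M' : ℤ} (h : M = M') (g : GoodRep M') : GoodRep M := by
  rw [h]; exact g

lemma sq3_dvd {x : ℤ} (h : (3:ℤ) ∣ x) : x^2 % 3 = 0 := by
  obtain ⟨k, rfl⟩ := h
  have : (3*k)^2 = 3*(3*k^2) := by ring
  omega

lemma sq3_not {x : ℤ} (h : ¬ (3:ℤ) ∣ x) : x^2 % 3 = 1 := by
  have hx : x % 3 = 1 ∨ x % 3 = 2 := by omega
  rcases hx with h'|h'
  · obtain ⟨k, hk⟩ : ∃ k, x = 3*k+1 := ⟨(x-1)/3, by omega⟩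
    have : x^2 = 3*(3*k^2+2*k)+1 := by rw [hk]; ring
    omega
  · obtain ⟨k, hk⟩ : ∃ k, x = 3*k+2 := ⟨(x-2)/3, by omega⟩
    have : x^2 = 3*(3*k^2+4*k+1)+1 := by rw [hk]; ring
    omega

lemma sq2 (x : ℤ) : x^2 % 2 = x % 2 := by
  have hx : x % 2 = 0 ∨ x % 2 = 1 := by omega
  rcases hx with h'|h'
  · obtain ⟨k, hk⟩ : ∃ k, x = 2*k := ⟨x/2, by omega⟩
    have : x^2 = 2*(2*k^2) := by rw [hk]; ring
    omega
  · obtain ⟨k, hk⟩ : ∃ k, x = 2*k+1 := ⟨(x-1)/2, by omega⟩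
    have : x^2 = 2*(2*k^2+2*k)+1 := by rw [hk]; ring
    omega

lemma triple_pair (p q : ℤ) (h : ¬((3:ℤ) ∣ p ∧ (3:ℤ) ∣ q)) :
    ∃ u v : ℤ, u^2 + 2*v^2 = 3*(p^2+2*q^2) ∧ ¬ (3:ℤ) ∣ u ∧ ¬ (3:ℤ) ∣ v := by
  have hp : p % 3 = 0 ∨ p % 3 = 1 ∨ p % 3 = 2 := by omega
  have hq : q % 3 = 0 ∨ q % 3 = 1 ∨ q % 3 = 2 := by omega
  have he : ∃ e : ℤ, (e = 1 ∨ e = -1) ∧ ¬ (3:ℤ) ∣ (p + e*q) := by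
    rcases hp with h'|h'|h' <;> rcases hq with h''|h''|h''
    · exact absurd ⟨by omega, by omega⟩ h
    all_goals first
      | exact ⟨1, Or.inl rfl, by omega⟩
      | exact ⟨-1, Or.inr rfl, by omega⟩
  obtain ⟨e, he1, he2⟩ := he
  refine ⟨p - 2*(e*q), p + e*q, ?_, ?_, he2⟩
  · rcases he1 with rfl|rfl <;> ring
  · intro hd; exact he2 (by omega)

lemma nine_pair (p q : ℤ) (h : ¬((3:ℤ) ∣ p ∧ (3:ℤ) ∣ q)) :
    ∃ u v : ℤ, u^2 + 2*v^2 = 9*(p^2+2*q^2) ∧ ¬ (3:ℤ) ∣ u ∧ ¬ (3:ℤ) ∣ v := by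
  obtain ⟨u, v, h1, h2, h3⟩ := triple_pair p q h
  obtain ⟨U, V, H1, H2, H3⟩ := triple_pair u v (fun hh => h2 hh.1)
  exact ⟨U, V, by rw [H1, h1]; ring, H2, H3⟩

lemma extract : ∀ n : ℕ, ∀ c d : ℤ, c.natAbs + d.natAbs ≤ n → ¬(c = 0 ∧ d = 0) →
    ∃ C D : ℤ, C^2 + 2*D^2 = c^2 + 2*d^2 ∧ ¬((3:ℤ) ∣ C ∧ (3:ℤ) ∣ D) := by
  intro n
  induction n with
  | zero =>
    intro c d hle hne
    exfalso
    exact hne ⟨Int.natAbs_eq_zero.mp (by omega), Int.natAbs_eq_zero.mp (by omega)⟩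
  | succ n ih =>
    intro c d hle hne
    by_cases h3 : (3:ℤ) ∣ c ∧ (3:ℤ) ∣ d
    · obtain ⟨⟨c', rfl⟩, ⟨d', rfl⟩⟩ := h3
      have hne' : ¬(c' = 0 ∧ d' = 0) := by
        rintro ⟨rfl, rfl⟩; exact hne ⟨by ring, by ring⟩
      have hpos : 1 ≤ c'.natAbs + d'.natAbs := by
        rcases not_and_or.mp hne' with h|h
        · have := Int.natAbs_pos.mpr h; omega
        · have := Int.natAbs_pos.mpr h; omega
      have hle' : c'.natAbs + d'.natAbs ≤ n := by
        have h1 : (3*c').natAbs = 3 * c'.natAbs := by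
          rw [Int.natAbs_mul]; rfl
        have h2 : (3*d').natAbs = 3 * d'.natAbs := by
          rw [Int.natAbs_mul]; rfl
        omega
      obtain ⟨C', D', H1, H2⟩ := ih c' d' hle' hne'
      obtain ⟨C, D, H3, H4, H5⟩ := nine_pair C' D' H2
      refine ⟨C, D, ?_, fun hh => H4 hh.1⟩
      rw [H3, H1]; ring
    · exact ⟨c, d, rfl, h3⟩

lemma build (a1 b1 a2 b2 : ℤ) (h3 : (3:ℤ) ∣ (a2 - b2)) (h1 : ¬(a1 = 0 ∧ b1 = 0))
    (h2 : ¬(a2 = 0 ∧ b2 = 0)) : GoodRep (a1^2 + 2*b1^2 + a2^2 + 2*b2^2) := by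
  obtain ⟨k, hk⟩ := h3
  have ha2 : a2 = b2 + 3*k := by omega
  obtain ⟨C, D, H1, H2⟩ := extract (a1.natAbs + b1.natAbs) a1 b1 le_rfl h1
  have hrs : ¬((b2 + k) = 0 ∧ k = 0) := by
    rintro ⟨h', rfl⟩
    exact h2 ⟨by omega, by omega⟩
  obtain ⟨R, S, H3, H4⟩ := extract ((b2+k).natAbs + k.natAbs) (b2+k) k le_rfl hrs
  refine ⟨C, D, R, S, ?_, H2, H4⟩
  have key : 3*R^2 + 6*S^2 = a2^2 + 2*b2^2 := by
    rw [ha2]; linear_combination (3:ℤ) * H3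
  linarith [H1, key]

lemma buildFlex (a1 b1 a2 b2 : ℤ) (h3 : (3:ℤ) ∣ (a2-b2) ∨ (3:ℤ) ∣ (a2+b2))
    (h1 : ¬(a1 = 0 ∧ b1 = 0)) (h2 : ¬(a2 = 0 ∧ b2 = 0)) :
    GoodRep (a1^2 + 2*b1^2 + a2^2 + 2*b2^2) := by
  rcases h3 with h3|h3
  · exact build a1 b1 a2 b2 h3 h1 h2
  · have hb : (3:ℤ) ∣ (a2 - (-b2)) := by
      rw [sub_neg_eq_add]; exact h3
    have := build a1 b1 a2 (-b2) hb h1 (by rintro ⟨h, h'⟩; exact h2 ⟨h, by omega⟩)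
    exact goodRep_eq (by ring) this

lemma match3 (a b : ℤ) (h : ((3:ℤ) ∣ a ∧ (3:ℤ) ∣ b) ∨ (¬(3:ℤ) ∣ a ∧ ¬(3:ℤ) ∣ b)) :
    (3:ℤ) ∣ (a-b) ∨ (3:ℤ) ∣ (a+b) := by
  have h1 : a % 3 = 0 ∨ a % 3 = 1 ∨ a % 3 = 2 := by omega
  have h2 : b % 3 = 0 ∨ b % 3 = 1 ∨ b % 3 = 2 := by omega
  rcases h with ⟨ha, hb⟩|⟨ha, hb⟩ <;>
    rcases h1 with h'|h'|h' <;> rcases h2 with h''|h''|h'' <;> omega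

lemma ne0 {x : ℤ} (h : ¬ (3:ℤ) ∣ x) : x ≠ 0 := by
  rintro rfl; exact h (dvd_zero 3)
-- L-lemmas: building GoodRep from a 4-square representation with parity/mod-3 info

/-- Case n₃ = 0 : all four coordinates prime to 3; `p,q` have equal parity. -/
lemma L0 (σ m p q : ℤ) (hσ : ¬(3:ℤ) ∣ σ) (hm : ¬(3:ℤ) ∣ m) (hp : ¬(3:ℤ) ∣ p)
    (hq : ¬(3:ℤ) ∣ q) (hpar : p % 2 = q % 2) : GoodRep (σ^2 + m^2 + p^2 + q^2) := by
  obtain ⟨v, hv⟩ : ∃ v : ℤ, p + q = 2*v := ⟨(p+q)/2, by omega⟩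
  set w := p - v with hw
  have hp' : p = v + w := by omega
  have hq' : q = v - w := by omega
  have key : p^2 + q^2 = 2*v^2 + 2*w^2 := by rw [hp', hq']; ring
  have hcase : ((3:ℤ) ∣ v ∧ ¬(3:ℤ) ∣ w) ∨ (¬(3:ℤ) ∣ v ∧ (3:ℤ) ∣ w) := by
    have h1 : ¬ (3:ℤ) ∣ (v+w) := by rw [← hp']; exact hp
    have h2 : ¬ (3:ℤ) ∣ (v-w) := by rw [← hq']; exact hq
    have hv3 : v % 3 = 0 ∨ v % 3 = 1 ∨ v % 3 = 2 := by omega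
    have hw3 : w % 3 = 0 ∨ w % 3 = 1 ∨ w % 3 = 2 := by omega
    rcases hv3 with h|h|h <;> rcases hw3 with h'|h'|h' <;> omega
  rcases hcase with ⟨h1, h2⟩ | ⟨h1, h2⟩
  · exact goodRep_eq (by linarith [key])
      (buildFlex σ v m w (match3 m w (Or.inr ⟨hm, h2⟩))
        (fun hh => ne0 hσ hh.1) (fun hh => ne0 hm hh.1))
  · exact goodRep_eq (by linarith [key])
      (buildFlex σ w m v (match3 m v (Or.inr ⟨hm, h1⟩))
        (fun hh => ne0 hσ hh.1) (fun hh => ne0 hm hh.1))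

/-- Case n₃ = 2 : `z, z'` divisible by 3, `g, u` not; `z,g` equal parity. -/
lemma L2 (z g u z' : ℤ) (hz : (3:ℤ) ∣ z) (hg : ¬(3:ℤ) ∣ g) (hu : ¬(3:ℤ) ∣ u)
    (hz' : (3:ℤ) ∣ z') (hpar : z % 2 = g % 2) : GoodRep (z^2 + g^2 + u^2 + z'^2) := by
  obtain ⟨v, hv⟩ : ∃ v : ℤ, z + g = 2*v := ⟨(z+g)/2, by omega⟩
  set w := z - v with hw
  have hp' : z = v + w := by omega
  have hq' : g = v - w := by omega
  have key : z^2 + g^2 = 2*v^2 + 2*w^2 := by rw [hp', hq']; ring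
  have hcase : ¬(3:ℤ) ∣ v ∧ ¬(3:ℤ) ∣ w := by
    have h1 : (3:ℤ) ∣ (v+w) := by rw [← hp']; exact hz
    have h2 : ¬ (3:ℤ) ∣ (v-w) := by rw [← hq']; exact hg
    have hv3 : v % 3 = 0 ∨ v % 3 = 1 ∨ v % 3 = 2 := by omega
    have hw3 : w % 3 = 0 ∨ w % 3 = 1 ∨ w % 3 = 2 := by omega
    rcases hv3 with h|h|h <;> rcases hw3 with h'|h'|h' <;> omega
  exact goodRep_eq (by linarith [key])
    (buildFlex z' w u v (match3 u v (Or.inr ⟨hu, hcase.1⟩))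
      (fun hh => ne0 hcase.2 hh.2) (fun hh => ne0 hu hh.1))

/-- Case n₃ = 3, nonzero residue at `σ`, with a trio element `m ≠ 0`. -/
lemma L3a (σ m p q : ℤ) (hσ : ¬(3:ℤ) ∣ σ) (hm : (3:ℤ) ∣ m) (hmne : m ≠ 0)
    (hp : (3:ℤ) ∣ p) (hq : (3:ℤ) ∣ q) (hpar : p % 2 = q % 2) :
    GoodRep (σ^2 + m^2 + p^2 + q^2) := by
  obtain ⟨v, hv⟩ : ∃ v : ℤ, p + q = 2*v := ⟨(p+q)/2, by omega⟩
  set w := p - v with hw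
  have hp' : p = v + w := by omega
  have hq' : q = v - w := by omega
  have key : p^2 + q^2 = 2*v^2 + 2*w^2 := by rw [hp', hq']; ring
  have hvw : (3:ℤ) ∣ v ∧ (3:ℤ) ∣ w := by
    have h1 : (3:ℤ) ∣ (v+w) := by rw [← hp']; exact hp
    have h2 : (3:ℤ) ∣ (v-w) := by rw [← hq']; exact hq
    omega
  exact goodRep_eq (by linarith [key])
    (buildFlex σ w m v (match3 m v (Or.inl ⟨hm, hvw.1⟩))
      (fun hh => ne0 hσ hh.1) (fun hh => hmne hh.1))

/-- Case n₃ = 3 with the nonzero residue inside the trio. Either we succeed or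
all of `σ, z, z'` vanish (square case). -/
lemma L3b (u σ z z' : ℤ) (hu : ¬(3:ℤ) ∣ u) (hσ : (3:ℤ) ∣ σ) (hz : (3:ℤ) ∣ z)
    (hz' : (3:ℤ) ∣ z') (hpar : z % 2 = z' % 2) :
    GoodRep (u^2 + σ^2 + z^2 + z'^2) ∨ (σ = 0 ∧ z = 0 ∧ z' = 0) := by
  obtain ⟨v, hv⟩ : ∃ v : ℤ, z + z' = 2*v := ⟨(z+z')/2, by omega⟩
  set w := z - v with hw
  have hp' : z = v + w := by omega
  have hq' : z' = v - w := by omega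
  have key : z^2 + z'^2 = 2*v^2 + 2*w^2 := by rw [hp', hq']; ring
  have hvw : (3:ℤ) ∣ v ∧ (3:ℤ) ∣ w := by
    have h1 : (3:ℤ) ∣ (v+w) := by rw [← hp']; exact hz
    have h2 : (3:ℤ) ∣ (v-w) := by rw [← hq']; exact hz'
    omega
  by_cases hσ0 : σ = 0
  · by_cases hv0 : v = 0
    · by_cases hw0 : w = 0
      · exact Or.inr ⟨hσ0, by omega, by omega⟩
      · refine Or.inl (goodRep_eq (by linarith [key])
          (buildFlex u v σ w (match3 σ w (Or.inl ⟨hσ, hvw.2⟩))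
            (fun hh => ne0 hu hh.1) (fun hh => hw0 hh.2)))
    · refine Or.inl (goodRep_eq (by linarith [key])
        (buildFlex u w σ v (match3 σ v (Or.inl ⟨hσ, hvw.1⟩))
          (fun hh => ne0 hu hh.1) (fun hh => hv0 hh.2)))
  · refine Or.inl (goodRep_eq (by linarith [key])
      (buildFlex u w σ v (match3 σ v (Or.inl ⟨hσ, hvw.1⟩))
        (fun hh => ne0 hu hh.1) (fun hh => hσ0 hh.1)))
/-- Main combinatorial step: given a four-square decomposition of an integer
not divisible by 3, whose last three coordinates share the same parity,
either we get a good representation or the number is a perfect square `u²`, `3 ∤ u`. -/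
lemma oddCore (x0 x1 x2 x3 : ℤ) (h12 : x1 % 2 = x2 % 2) (h23 : x2 % 2 = x3 % 2)
    (hM3 : ¬ (3:ℤ) ∣ (x0^2+x1^2+x2^2+x3^2)) :
    GoodRep (x0^2+x1^2+x2^2+x3^2) ∨
      (∃ u : ℤ, x0^2+x1^2+x2^2+x3^2 = u^2 ∧ ¬ (3:ℤ) ∣ u) := by
  by_cases h0 : (3:ℤ) ∣ x0 <;> by_cases h1 : (3:ℤ) ∣ x1 <;>
    by_cases h2 : (3:ℤ) ∣ x2 <;> by_cases h3 : (3:ℤ) ∣ x3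
  -- ++++
  · exfalso; apply hM3
    have e0 := sq3_dvd h0; have e1 := sq3_dvd h1
    have e2 := sq3_dvd h2; have e3 := sq3_dvd h3
    omega
  -- +++-
  · rcases L3b x3 x0 x1 x2 h3 h0 h1 h2 h12 with h | ⟨ha, hb, hc⟩
    · exact Or.inl (goodRep_eq (by ring) h)
    · exact Or.inr ⟨x3, by rw [ha, hb, hc]; ring, h3⟩
  -- ++-+
  · rcases L3b x2 x0 x1 x3 h2 h0 h1 h3 (by omega) with h | ⟨ha, hb, hc⟩
    · exact Or.inl (goodRep_eq (by ring) h)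
    · exact Or.inr ⟨x2, by rw [ha, hb, hc]; ring, h2⟩
  -- ++--  zeros {x0,x1}
  · exact Or.inl (goodRep_eq (by ring) (L2 x1 x2 x3 x0 h1 h2 h3 h0 h12))
  -- +-++
  · rcases L3b x1 x0 x2 x3 h1 h0 h2 h3 h23 with h | ⟨ha, hb, hc⟩
    · exact Or.inl (goodRep_eq (by ring) h)
    · exact Or.inr ⟨x1, by rw [ha, hb, hc]; ring, h1⟩
  -- +-+-  zeros {x0,x2}
  · exact Or.inl (goodRep_eq (by ring) (L2 x2 x1 x3 x0 h2 h1 h3 h0 (by omega)))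
  -- +--+  zeros {x0,x3}
  · exact Or.inl (goodRep_eq (by ring) (L2 x3 x1 x2 x0 h3 h1 h2 h0 (by omega)))
  -- +---  n₃ = 1, impossible
  · exfalso; apply hM3
    have e0 := sq3_dvd h0; have e1 := sq3_not h1
    have e2 := sq3_not h2; have e3 := sq3_not h3
    omega
  -- -+++  trio all divisible
  · by_cases hx1 : x1 = 0
    · by_cases hx2 : x2 = 0
      · by_cases hx3 : x3 = 0
        · exact Or.inr ⟨x0, by rw [hx1, hx2, hx3]; ring, h0⟩
        · exact Or.inl (goodRep_eq (by ring) (L3a x0 x3 x1 x2 h0 h3 hx3 h1 h2 h12))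
      · exact Or.inl (goodRep_eq (by ring) (L3a x0 x2 x1 x3 h0 h2 hx2 h1 h3 (by omega)))
    · exact Or.inl (goodRep_eq (by ring) (L3a x0 x1 x2 x3 h0 h1 hx1 h2 h3 h23))
  -- -++-  zeros {x1,x2}
  · exact Or.inl (goodRep_eq (by ring) (L2 x1 x3 x0 x2 h1 h3 h0 h2 (by omega)))
  -- -+-+  zeros {x1,x3}
  · exact Or.inl (goodRep_eq (by ring) (L2 x1 x2 x0 x3 h1 h2 h0 h3 h12))
  -- -+--  n₃ = 1
  · exfalso; apply hM3
    have e0 := sq3_not h0; have e1 := sq3_dvd h1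
    have e2 := sq3_not h2; have e3 := sq3_not h3
    omega
  -- --++  zeros {x2,x3}
  · exact Or.inl (goodRep_eq (by ring) (L2 x2 x1 x0 x3 h2 h1 h0 h3 (by omega)))
  -- --+-
  · exfalso; apply hM3
    have e0 := sq3_not h0; have e1 := sq3_not h1
    have e2 := sq3_dvd h2; have e3 := sq3_not h3
    omega
  -- ---+
  · exfalso; apply hM3
    have e0 := sq3_not h0; have e1 := sq3_not h1
    have e2 := sq3_not h2; have e3 := sq3_dvd h3
    omega
  -- ----
  · exact Or.inl (goodRep_eq (by ring) (L0 x0 x1 x2 x3 h0 h1 h2 h3 h23))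
lemma double {M : ℤ} (h : GoodRep M) : GoodRep (2*M) := by
  obtain ⟨c, d, r, s, he, h1, h2⟩ := h
  refine ⟨2*d, c, 2*s, r, by rw [he]; ring, ?_, ?_⟩
  · rintro ⟨ha, hb⟩; exact h1 ⟨hb, by omega⟩
  · rintro ⟨ha, hb⟩; exact h2 ⟨hb, by omega⟩

lemma tripleAll {M : ℤ} (h : GoodRep M) :
    ∃ A B C D : ℤ, 3*M = A^2+2*B^2+3*C^2+6*D^2 ∧
      ¬(3:ℤ) ∣ A ∧ ¬(3:ℤ) ∣ B ∧ ¬(3:ℤ) ∣ C ∧ ¬(3:ℤ) ∣ D := by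
  obtain ⟨c, d, r, s, he, h1, h2⟩ := h
  obtain ⟨A, B, hAB, hA, hB⟩ := triple_pair c d h1
  obtain ⟨C, D, hCD, hC, hD⟩ := triple_pair r s h2
  refine ⟨A, B, C, D, ?_, hA, hB, hC, hD⟩
  rw [he]; linarith [hAB, hCD]

lemma tripleGood {M : ℤ} (h : GoodRep M) : GoodRep (3*M) := by
  obtain ⟨A, B, C, D, he, hA, hB, hC, hD⟩ := tripleAll h
  exact ⟨A, B, C, D, he, fun hh => hA hh.1, fun hh => hC hh.1⟩

lemma sq_good (c d r s : ℤ) (h1 : ¬((3:ℤ) ∣ c ∧ (3:ℤ) ∣ d))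
    (h2 : ¬((3:ℤ) ∣ r ∧ (3:ℤ) ∣ s)) :
    GoodRep ((c^2+2*d^2+3*r^2+6*s^2)^2) := by
  have p3 : Prime (3:ℤ) := Int.prime_three
  by_cases hc : (3:ℤ) ∣ c
  · have hd : ¬(3:ℤ) ∣ d := fun h => h1 ⟨hc, h⟩
    by_cases hs : (3:ℤ) ∣ s
    · have hr : ¬(3:ℤ) ∣ r := fun h => h2 ⟨h, hs⟩
      -- P2 : q·(γ̄+δ̄J)
      refine ⟨c^2+2*d^2-3*r^2+6*s^2, 6*(r*s), 2*(r*c), 2*(r*d), by ring, ?_, ?_⟩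
      · rintro ⟨hA, -⟩
        have e1 := sq3_dvd hc; have e2 := sq3_not hd
        omega
      · rintro ⟨-, hB⟩
        rcases p3.dvd_mul.mp hB with h | h
        · omega
        · rcases p3.dvd_mul.mp h with h' | h'
          · exact hr h'
          · exact hd h'
    · -- P3 : q·(γ+δ̄J)
      refine ⟨c^2-2*d^2-3*r^2+6*s^2, 2*(c*d)-6*(r*s), 2*(c*r)+4*(d*s), 0, by ring, ?_, ?_⟩
      · rintro ⟨hA, -⟩
        have e1 := sq3_dvd hc; have e2 := sq3_not hd
        omega
      · rintro ⟨hC, -⟩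
        have hcr : (3:ℤ) ∣ 2*(c*r) := Dvd.dvd.mul_left (hc.mul_right r) 2
        have h4 : (3:ℤ) ∣ 4*(d*s) := by
          have h5 := hC.sub hcr
          rw [show 2*(c*r)+4*(d*s) - 2*(c*r) = 4*(d*s) by ring] at h5
          exact h5
        rcases p3.dvd_mul.mp h4 with h | h
        · omega
        · rcases p3.dvd_mul.mp h with h' | h'
          · exact hd h'
          · exact hs h'
  · -- P1 : q²
    refine ⟨c^2-2*d^2-3*r^2-6*s^2, 2*(c*d), 2*(c*r), 2*(c*s), by ring, ?_, ?_⟩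
    · rintro ⟨hA, hB⟩
      have hd : (3:ℤ) ∣ d := by
        rcases p3.dvd_mul.mp hB with h | h
        · exfalso; omega
        · rcases p3.dvd_mul.mp h with h' | h'
          · exact absurd h' hc
          · exact h'
      have e1 := sq3_not hc; have e2 := sq3_dvd hd
      omega
    · rintro ⟨hC, hD⟩
      apply h2
      constructor
      · rcases p3.dvd_mul.mp hC with h | h
        · exfalso; omega
        · rcases p3.dvd_mul.mp h with h' | h'
          · exact absurd h' hc
          · exact h'
      · rcases p3.dvd_mul.mp hD with h | h
        · exfalso; omega
        · rcases p3.dvd_mul.mp h with h' | h'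
          · exact absurd h' hc
          · exact h'
lemma good_all (m : ℕ) : 4 ≤ m → GoodRep (m : ℤ) := by
  induction m using Nat.strong_induction_on with
  | _ m ih =>
  intro hm4
  by_cases hm2 : m % 2 = 0
  · by_cases hk : 8 ≤ m
    · obtain ⟨k, rfl⟩ : ∃ k, m = 2*k := ⟨m/2, by omega⟩
      have := double (ih k (by omega) (by omega))
      exact goodRep_eq (by push_cast; ring) this
    · have : m = 4 ∨ m = 6 := by omega
      rcases this with rfl | rfl
      · exact ⟨1, 0, 1, 0, by norm_num, by omega, by omega⟩
      · exact ⟨1, 1, 1, 0, by norm_num, by omega, by omega⟩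
  · by_cases hm3 : m % 3 = 0
    · by_cases hw : 4 ≤ m / 3
      · obtain ⟨w, rfl⟩ : ∃ w, m = 3*w := ⟨m/3, by omega⟩
        have := tripleGood (ih w (by omega) (by omega))
        exact goodRep_eq (by push_cast; ring) this
      · have : m = 9 := by omega
        subst this
        exact ⟨1, 1, 0, 1, by norm_num, by omega, by omega⟩
    · -- m odd, not divisible by 3
      obtain ⟨a, b, c, d, habcd⟩ := Nat.sum_four_squares m
      have hMeq : (m:ℤ) = (a:ℤ)^2+(b:ℤ)^2+(c:ℤ)^2+(d:ℤ)^2 := by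
        exact_mod_cast habcd.symm
      have hM3' : ¬ (3:ℤ) ∣ ((a:ℤ)^2+(b:ℤ)^2+(c:ℤ)^2+(d:ℤ)^2) := by
        rw [← hMeq]; omega
      have hsq : ∀ P : ℤ, P^2 % 2 = P % 2 := sq2
      have sa := hsq (a:ℤ); have sb := hsq (b:ℤ)
      have sc := hsq (c:ℤ); have sd := hsq (d:ℤ)
      have hModd : ((m:ℤ)) % 2 = 1 := by omega
      have main : GoodRep ((a:ℤ)^2+(b:ℤ)^2+(c:ℤ)^2+(d:ℤ)^2) ∨
          (∃ u : ℤ, (a:ℤ)^2+(b:ℤ)^2+(c:ℤ)^2+(d:ℤ)^2 = u^2 ∧ ¬ (3:ℤ) ∣ u) := by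
        by_cases pab : (a:ℤ) % 2 = (b:ℤ) % 2 <;>
          by_cases pac : (a:ℤ) % 2 = (c:ℤ) % 2 <;>
          by_cases pad : (a:ℤ) % 2 = (d:ℤ) % 2
        -- TTT : trio (b,c,d), σ = a
        · exact oddCore (a:ℤ) (b:ℤ) (c:ℤ) (d:ℤ) (by omega) (by omega) hM3'
        -- TTF : σ = d, trio (a,b,c)
        · rcases oddCore (d:ℤ) (a:ℤ) (b:ℤ) (c:ℤ) (by omega) (by omega)
            (by intro hh; exact hM3' (by omega)) with h | ⟨u, hu, hu3⟩
          · exact Or.inl (goodRep_eq (by ring) h)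
          · exact Or.inr ⟨u, by rw [← hu]; ring, hu3⟩
        -- TFT : σ = c, trio (a,b,d)
        · rcases oddCore (c:ℤ) (a:ℤ) (b:ℤ) (d:ℤ) (by omega) (by omega)
            (by intro hh; exact hM3' (by omega)) with h | ⟨u, hu, hu3⟩
          · exact Or.inl (goodRep_eq (by ring) h)
          · exact Or.inr ⟨u, by rw [← hu]; ring, hu3⟩
        -- TFF : 2-2 split, m even : contradiction
        · exfalso; rw [hMeq] at hModd; omega
        -- FTT : σ = b, trio (a,c,d)
        · rcases oddCore (b:ℤ) (a:ℤ) (c:ℤ) (d:ℤ) (by omega) (by omega)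
            (by intro hh; exact hM3' (by omega)) with h | ⟨u, hu, hu3⟩
          · exact Or.inl (goodRep_eq (by ring) h)
          · exact Or.inr ⟨u, by rw [← hu]; ring, hu3⟩
        -- FTF : 2-2 split
        · exfalso; rw [hMeq] at hModd; omega
        -- FFT : 2-2 split
        · exfalso; rw [hMeq] at hModd; omega
        -- FFF : trio (b,c,d), σ = a
        · exact oddCore (a:ℤ) (b:ℤ) (c:ℤ) (d:ℤ) (by omega) (by omega) hM3'
      rcases main with h | ⟨u, hu, hu3⟩
      · exact goodRep_eq hMeq h
      · -- square case : m = u², recurse on |u|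
        have hmu : (m:ℤ) = u^2 := by rw [hMeq, hu]
        have hk2 : ((u.natAbs:ℕ):ℤ)^2 = u^2 := Int.natAbs_sq u
        set k := u.natAbs with hkdef
        have hkm : k^2 = m := by
          have : ((k:ℕ):ℤ)^2 = ((m:ℕ):ℤ) := by rw [hk2, ← hmu]
          exact_mod_cast this
        have hk4 : 4 ≤ k := by
          by_contra hlt
          interval_cases k <;> omega
        have hkm' : k < m := by nlinarith
        obtain ⟨c', d', r', s', he, hh1, hh2⟩ := ih k hkm' hk4
        have := sq_good c' d' r' s' hh1 hh2
        refine goodRep_eq ?_ this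
        rw [← he, hk2, hmu]
lemma octa (A : ℤ) (h : ¬ (3:ℤ) ∣ A) : ∃ x : ℤ, A^2 = (3*x-1)^2 := by
  have hA : A % 3 = 1 ∨ A % 3 = 2 := by omega
  rcases hA with h' | h'
  · obtain ⟨x, hx⟩ : ∃ x : ℤ, 3*x - 1 = -A := ⟨(1-A)/3, by omega⟩
    exact ⟨x, by rw [hx]; ring⟩
  · obtain ⟨x, hx⟩ : ∃ x : ℤ, 3*x - 1 = A := ⟨(A+1)/3, by omega⟩
    exact ⟨x, by rw [hx]⟩

theorem stmt2 (n : ℤ) (hn : 0 < n) :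
    ∃ x y z t : ℤ, (3*x^2 - 2*x) + 2*(3*y^2 - 2*y) + 3*(3*z^2 - 2*z) + 6*(3*t^2 - 2*t) = n := by
  have h4 : 4 ≤ (n+4).toNat := by omega
  have hg := good_all (n+4).toNat h4
  have hcast : (((n+4).toNat : ℕ) : ℤ) = n + 4 := by omega
  rw [hcast] at hg
  obtain ⟨A, B, C, D, hrep, hA, hB, hC, hD⟩ := tripleAll hg
  obtain ⟨x, hx⟩ := octa A hA
  obtain ⟨y, hy⟩ := octa B hB
  obtain ⟨z, hz⟩ := octa C hC
  obtain ⟨t, ht⟩ := octa D hD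
  refine ⟨x, y, z, t, ?_⟩
  have ex : A^2 = 3*(3*x^2-2*x)+1 := by rw [hx]; ring
  have ey : B^2 = 3*(3*y^2-2*y)+1 := by rw [hy]; ring
  have ez : C^2 = 3*(3*z^2-2*z)+1 := by rw [hz]; ring
  have et : D^2 = 3*(3*t^2-2*t)+1 := by rw [ht]; ring
  linarith [hrep, ex, ey, ez, et]
end

section
/- For positive integers a, b, c, d with a ≤ b ≤ c ≤ d, if the sum a·P8(x) + b·P8(y) + c·P8(z) + d·P8(t) represents all non-negative integers, then a = 1 and b ∈ {1, 2}. -/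
lemma p8_nonneg (x : ℤ) : 0 ≤ 3*x^2 - 2*x := by
  rcases le_or_gt x 0 with h | h
  · nlinarith
  · have h1 : 1 ≤ x := h
    nlinarith

lemma p8_ne_two (x : ℤ) : 3*x^2 - 2*x ≠ 2 := by
  have h : x ≤ -1 ∨ x = 0 ∨ x = 1 ∨ 2 ≤ x := by omega
  rcases h with h | h | h | h
  · nlinarith
  · subst h; norm_num
  · subst h; norm_num
  · nlinarith

lemma termlem (a k P : ℤ) (ha : 0 < a) (hk : a ≤ k) (hP : 0 ≤ P) :
    k * P = 0 ∨ a ≤ k * P := by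
  rcases eq_or_lt_of_le hP with h | h
  · left; rw [← h]; ring
  · right
    have h1 : 1 ≤ P := h
    nlinarith [mul_nonneg (by linarith : (0:ℤ) ≤ k) (by linarith : (0:ℤ) ≤ P - 1)]

theorem stmt5 (a b c d : ℤ) (ha : 0 < a) (hab : a ≤ b) (hbc : b ≤ c) (hcd : c ≤ d)
    (huniv : ∀ n : ℤ, 0 ≤ n →
      ∃ x y z t : ℤ, a*(3*x^2 - 2*x) + b*(3*y^2 - 2*y) + c*(3*z^2 - 2*z) + d*(3*t^2 - 2*t) = n) :
    a = 1 ∧ (b = 1 ∨ b = 2) := by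
  have hac : a ≤ c := le_trans hab hbc
  have had : a ≤ d := le_trans hac hcd
  have ha1 : a = 1 := by
    obtain ⟨x, y, z, t, h1⟩ := huniv 1 (by norm_num)
    have t1 := termlem a a _ ha le_rfl (p8_nonneg x)
    have t2 := termlem a b _ ha hab (p8_nonneg y)
    have t3 := termlem a c _ ha hac (p8_nonneg z)
    have t4 := termlem a d _ ha had (p8_nonneg t)
    have n1 : 0 ≤ a * (3*x^2 - 2*x) := mul_nonneg ha.le (p8_nonneg x)
    have n2 : 0 ≤ b * (3*y^2 - 2*y) := mul_nonneg (by linarith) (p8_nonneg y)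
    have n3 : 0 ≤ c * (3*z^2 - 2*z) := mul_nonneg (by linarith) (p8_nonneg z)
    have n4 : 0 ≤ d * (3*t^2 - 2*t) := mul_nonneg (by linarith) (p8_nonneg t)
    omega
  subst ha1
  refine ⟨rfl, ?_⟩
  by_contra hb2
  have hb3 : 3 ≤ b := by omega
  obtain ⟨x, y, z, t, h2⟩ := huniv 2 (by norm_num)
  have t2 := termlem b b _ (by omega) le_rfl (p8_nonneg y)
  have t3 := termlem b c _ (by omega) hbc (p8_nonneg z)
  have t4 := termlem b d _ (by omega) (le_trans hbc hcd) (p8_nonneg t)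
  have n1 : 0 ≤ 1 * (3*x^2 - 2*x) := mul_nonneg one_pos.le (p8_nonneg x)
  have n2 : 0 ≤ b * (3*y^2 - 2*y) := mul_nonneg (by linarith) (p8_nonneg y)
  have n3 : 0 ≤ c * (3*z^2 - 2*z) := mul_nonneg (by linarith) (p8_nonneg z)
  have n4 : 0 ≤ d * (3*t^2 - 2*t) := mul_nonneg (by linarith) (p8_nonneg t)
  have hx2 : 3*x^2 - 2*x ≠ 2 := p8_ne_two x
  have h1x : 1 * (3*x^2 - 2*x) = 3*x^2 - 2*x := one_mul _
  omega
end

section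
/- An integer n is represented by the diagonal ternary form 3x² + 3y² + 6z² over ℤ if and only if n is divisible by 3 and n is not of the form 6·4^s·(8t + 7) for any non-negative integers s, t. -/
/-!
Since `3x² + 3y² + 6z² = 3(x² + y² + 2z²)` and `(x + y)² + (x - y)² + (2z)² = 2(x² + y² + 2z²)`
(conversely, two of three squares summing to an even number have summands of equal parity),
everything reduces to Legendre's three-square theorem for `2m`. Its necessity is the obstruction
modulo `8` together with descent by `4`.

For sufficiency, let `N ≥ 2` be neither divisible by `4` nor `≡ 7 mod 8`. Dirichlet's theorem and
quadratic reciprocity give `D > 0` and `b` with `(N D - 1) a = b² + D`, and then the ternary form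
with Gram matrix `[[N, 1, 0], [1, a, b], [0, b, N D - 1]]` is positive definite, has determinant `1`
and represents `N`. Every such form is equivalent to `x² + y² + z²`: its minimum is attained at a
primitive vector, which a unimodular change of basis moves to `e₀`; Hermite's bound for the binary
form obtained by completing the square forces the minimum to be `1`, and splitting off that square
leaves a positive definite binary form of determinant `1`, which is `y² + z²` by the same argument
one dimension down.
-/

open Matrix

theorem Int.exists_two_mul_abs_mul_add_le {a : ℤ} (ha : 0 < a) (w : ℤ) :
    ∃ x, 2 * |a * x + w| ≤ a := by
  refine ⟨-((2 * w + a) / (2 * a)), ?_⟩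
  rw [← abs_two, ← abs_mul, abs_two]
  refine abs_le.2 ⟨?_, ?_⟩ <;>
  · have := Int.mul_ediv_add_emod (2 * w + a) (2 * a)
    have := Int.emod_nonneg (2 * w + a) (by omega : 2 * a ≠ 0)
    have := Int.emod_lt_of_pos (2 * w + a) (by omega : 0 < 2 * a)
    linarith

def IsPrimitiveVector {ι : Type*} (v : ι → ℤ) : Prop := ∀ g : ℤ, (∀ i, g ∣ v i) → IsUnit g

theorem IsPrimitiveVector.natCast_eq_one {ι : Type*} {v : ι → ℤ} (hv : IsPrimitiveVector v)
    {g : ℕ} (hg : ∀ i, (g : ℤ) ∣ v i) : g = 1 :=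
  Nat.isUnit_iff.1 (Int.ofNat_isUnit.1 (hv g hg))

theorem IsPrimitiveVector.exists_det_eq_one_fin_two {v : Fin 2 → ℤ}
    (hv : IsPrimitiveVector v) :
    ∃ M : Matrix (Fin 2) (Fin 2) ℤ, M.det = 1 ∧ Mᵀ 0 = v := by
  have hcop : IsCoprime (v 0) (v 1) :=
    Int.isCoprime_iff_gcd_eq_one.2 <| hv.natCast_eq_one fun i ↦ by
      fin_cases i
      exacts [Int.gcd_dvd_left .., Int.gcd_dvd_right ..]
  obtain ⟨u, w, huw⟩ := hcop
  refine ⟨!![v 0, -w; v 1, u], by rw [det_fin_two_of]; linarith, ?_⟩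
  ext i; fin_cases i <;> rfl

theorem IsPrimitiveVector.exists_det_eq_one_fin_three {v : Fin 3 → ℤ}
    (hv : IsPrimitiveVector v) :
    ∃ M : Matrix (Fin 3) (Fin 3) ℤ, M.det = 1 ∧ Mᵀ 0 = v := by
  rcases Nat.eq_zero_or_pos (Int.gcd (v 1) (v 2)) with hg | hg
  · obtain ⟨h1, h2⟩ := Int.gcd_eq_zero_iff.1 hg
    have hu : IsUnit (v 0) := hv (v 0) fun i ↦ by fin_cases i <;> simp [h1, h2]
    refine ⟨!![v 0, 0, 0; 0, v 0, 0; 0, 0, 1], ?_, ?_⟩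
    · rcases Int.isUnit_iff.1 hu with h | h <;> simp [det_fin_three, h]
    · ext i; fin_cases i <;> simp [h1, h2]
  · obtain ⟨y, z, hyz, h1, h2⟩ := Int.exists_gcd_one hg
    obtain ⟨u, w, huw⟩ := Int.isCoprime_iff_gcd_eq_one.2 hyz
    obtain ⟨s, t, hst⟩ : IsCoprime (v 0) (Int.gcd (v 1) (v 2)) :=
      Int.isCoprime_iff_gcd_eq_one.2 <| hv.natCast_eq_one fun i ↦ by
        fin_cases i
        · exact Int.gcd_dvd_left ..
        · exact (Int.gcd_dvd_right ..).trans (Int.gcd_dvd_left ..)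
        · exact (Int.gcd_dvd_right ..).trans (Int.gcd_dvd_right ..)
    -- The determinant of this matrix is `(s v₀ + t g) (u y + w z)`, where `g = gcd (v₁, v₂)`.
    refine ⟨!![v 0, -t, 0; v 1, s * y, -w; v 2, s * z, u], ?_, ?_⟩
    · simp only [det_fin_three, of_apply, cons_val', cons_val_zero, cons_val_one, cons_val_two,
        empty_val', cons_val_fin_one, head_cons, tail_cons, head_fin_const]
      linear_combination
        (v 0 * s + t * Int.gcd (v 1) (v 2)) * huw + hst + t * u * h1 + t * w * h2
    · ext i; fin_cases i <;> rfl

namespace Matrix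

variable {ι : Type*} [Fintype ι]

theorem dotProduct_transpose_mul_mul_mulVec {R : Type*} [CommSemiring R] (A M : Matrix ι ι R)
    (v : ι → R) : v ⬝ᵥ (Mᵀ * A * M) *ᵥ v = (M *ᵥ v) ⬝ᵥ A *ᵥ (M *ᵥ v) := by
  rw [← mulVec_mulVec, ← mulVec_mulVec, dotProduct_mulVec, vecMul_transpose]

theorem transpose_mul_mul_apply_self [DecidableEq ι] {R : Type*} [CommSemiring R]
    (A M : Matrix ι ι R) (i : ι) : (Mᵀ * A * M) i i = Mᵀ i ⬝ᵥ A *ᵥ Mᵀ i := by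
  have hcol : Mᵀ i = M *ᵥ Pi.single i 1 := by ext j; simp
  rw [hcol, ← dotProduct_transpose_mul_mul_mulVec]
  simp

theorem exists_eq_transpose_mul_self_of_transpose_mul_mul [DecidableEq ι] {R : Type*}
    [CommRing R] {A M N : Matrix ι ι R} (hM : IsUnit M.det) (h : Mᵀ * A * M = Nᵀ * N) :
    ∃ N' : Matrix ι ι R, A = N'ᵀ * N' := by
  refine ⟨N * M⁻¹, ?_⟩
  rw [transpose_mul, Matrix.mul_assoc, ← Matrix.mul_assoc Nᵀ, ← h, transpose_nonsing_inv]
  simp [Matrix.mul_assoc, mul_nonsing_inv _ hM, nonsing_inv_mul_cancel_left _ _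
    (isUnit_det_transpose M hM)]

theorem posDef_int_iff {A : Matrix ι ι ℤ} :
    A.PosDef ↔ A.IsSymm ∧ ∀ v ≠ 0, 0 < v ⬝ᵥ A *ᵥ v := by
  simp [posDef_iff_dotProduct_mulVec, IsHermitian, IsSymm, conjTranspose_eq_transpose_of_trivial]

theorem PosDef.dotProduct_mulVec_pos_int {A : Matrix ι ι ℤ} (hA : A.PosDef) {v : ι → ℤ}
    (hv : v ≠ 0) : 0 < v ⬝ᵥ A *ᵥ v :=
  (posDef_int_iff.1 hA).2 v hv

theorem PosDef.transpose_mul_mul_int [DecidableEq ι] {A : Matrix ι ι ℤ} (hA : A.PosDef)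
    {M : Matrix ι ι ℤ} (hM : M.det ≠ 0) : (Mᵀ * A * M).PosDef := by
  simpa [conjTranspose_eq_transpose_of_trivial] using
    hA.conjTranspose_mul_mul_same (mulVec_injective_of_det_ne_zero hM)

theorem PosDef.exists_forall_le [Nonempty ι] {A : Matrix ι ι ℤ} (hA : A.PosDef) :
    ∃ v ≠ 0, ∀ w ≠ 0, v ⬝ᵥ A *ᵥ v ≤ w ⬝ᵥ A *ᵥ w := by
  obtain ⟨μ, ⟨v, hv, rfl⟩, hμ⟩ :=
    Int.exists_least_of_bdd (P := fun z ↦ ∃ v ≠ 0, v ⬝ᵥ A *ᵥ v = z)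
    ⟨0, by rintro _ ⟨v, hv, rfl⟩; exact (hA.dotProduct_mulVec_pos_int hv).le⟩
    ⟨_, fun _ ↦ 1, Function.ne_iff.2 ⟨Classical.arbitrary ι, one_ne_zero⟩, rfl⟩
  exact ⟨v, hv, fun w hw ↦ hμ _ ⟨w, hw, rfl⟩⟩

theorem PosDef.isPrimitiveVector_of_forall_le {A : Matrix ι ι ℤ} (hA : A.PosDef) {v : ι → ℤ}
    (hv : v ≠ 0) (hmin : ∀ w ≠ 0, v ⬝ᵥ A *ᵥ v ≤ w ⬝ᵥ A *ᵥ w) : IsPrimitiveVector v := by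
  intro g hg
  choose w hw using hg
  have hvw : v = g • w := funext hw
  have hw0 : w ≠ 0 := by rintro rfl; simp [hvw] at hv
  have hval : v ⬝ᵥ A *ᵥ v = g ^ 2 * (w ⬝ᵥ A *ᵥ w) := by
    rw [hvw, mulVec_smul, dotProduct_smul, smul_dotProduct, smul_eq_mul, smul_eq_mul]; ring
  have hpos := hA.dotProduct_mulVec_pos_int hw0
  have hle := hmin w hw0
  have hg0 : g ≠ 0 := by rintro rfl; simp [hvw] at hv
  have hg1 : g ^ 2 ≤ 1 := by nlinarith
  have : -1 ≤ g ∧ g ≤ 1 := by constructor <;> nlinarith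
  rw [Int.isUnit_iff]
  omega

theorem forall_le_transpose_mul_mul [DecidableEq ι] {A M : Matrix ι ι ℤ} {v : ι → ℤ} {i : ι}
    (hM : M.det ≠ 0) (hcol : Mᵀ i = v) (hmin : ∀ w ≠ 0, v ⬝ᵥ A *ᵥ v ≤ w ⬝ᵥ A *ᵥ w) :
    ∀ w ≠ 0, (Mᵀ * A * M) i i ≤ w ⬝ᵥ (Mᵀ * A * M) *ᵥ w := by
  intro w hw
  rw [transpose_mul_mul_apply_self, dotProduct_transpose_mul_mul_mulVec, hcol]
  exact hmin _ fun h ↦ hw (eq_zero_of_mulVec_eq_zero hM h)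

theorem PosDef.exists_det_eq_one_forall_le [DecidableEq ι] [Nonempty ι] {A : Matrix ι ι ℤ}
    (hA : A.PosDef) (i : ι)
    (hext : ∀ v, IsPrimitiveVector v → ∃ M : Matrix ι ι ℤ, M.det = 1 ∧ Mᵀ i = v) :
    ∃ M : Matrix ι ι ℤ, M.det = 1 ∧ ∀ w ≠ 0, (Mᵀ * A * M) i i ≤ w ⬝ᵥ (Mᵀ * A * M) *ᵥ w := by
  obtain ⟨v, hv, hmin⟩ := hA.exists_forall_le
  obtain ⟨M, hdet, hcol⟩ := hext v (hA.isPrimitiveVector_of_forall_le hv hmin)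
  exact ⟨M, hdet, forall_le_transpose_mul_mul (by simp [hdet]) hcol hmin⟩

theorem three_mul_sq_le_four_mul_det_of_forall_le {B : Matrix (Fin 2) (Fin 2) ℤ} (hB : B.IsSymm)
    (hpos : 0 < B 0 0) (hmin : ∀ w ≠ 0, B 0 0 ≤ w ⬝ᵥ B *ᵥ w) : 3 * B 0 0 ^ 2 ≤ 4 * B.det := by
  -- `B₀₀ · B(x, 1) = (B₀₀ x + B₀₁)² + det B`, and `x` is chosen with `|B₀₀ x + B₀₁| ≤ B₀₀ / 2`.
  obtain ⟨x, hx⟩ := Int.exists_two_mul_abs_mul_add_le hpos (B 0 1)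
  have hval := hmin ![x, 1] fun h ↦ by simpa using congrFun h 1
  have hsymm := hB.apply 0 1
  simp only [dotProduct, mulVec, Fin.sum_univ_two, cons_val_zero, cons_val_one, mul_one,
    hsymm] at hval
  rw [det_fin_two, hsymm]
  have hsq : (2 * (B 0 0 * x + B 0 1)) ^ 2 ≤ B 0 0 ^ 2 := by
    rw [← sq_abs, abs_mul, abs_two]; exact pow_le_pow_left₀ (by positivity) hx 2
  nlinarith [mul_le_mul_of_nonneg_left hval hpos.le]

theorem PosDef.exists_det_eq_one_three_mul_sq_le_fin_two {B : Matrix (Fin 2) (Fin 2) ℤ}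
    (hB : B.PosDef) : ∃ M : Matrix (Fin 2) (Fin 2) ℤ,
      M.det = 1 ∧ 3 * (Mᵀ * B * M) 0 0 ^ 2 ≤ 4 * B.det := by
  obtain ⟨M, hdet, hmin⟩ :=
    hB.exists_det_eq_one_forall_le 0 fun _ hv ↦ hv.exists_det_eq_one_fin_two
  have hB' := hB.transpose_mul_mul_int (M := M) (by simp [hdet])
  refine ⟨M, hdet, ?_⟩
  simpa [det_mul, hdet] using three_mul_sq_le_four_mul_det_of_forall_le
    (posDef_int_iff.1 hB').1 hB'.diag_pos hmin

theorem PosDef.exists_eq_transpose_mul_self_fin_two {B : Matrix (Fin 2) (Fin 2) ℤ}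
    (hB : B.PosDef) (hdet : B.det = 1) : ∃ N : Matrix (Fin 2) (Fin 2) ℤ, B = Nᵀ * N := by
  obtain ⟨M, hMdet, hM⟩ := hB.exists_det_eq_one_three_mul_sq_le_fin_two
  have hB' := hB.transpose_mul_mul_int (M := M) (by simp [hMdet])
  set B' := Mᵀ * B * M
  have h00 : B' 0 0 = 1 := by rw [hdet] at hM; nlinarith [hB'.diag_pos (i := 0)]
  have hdet' : B'.det = 1 := by simp [B', det_mul, hMdet, hdet]
  have hsymm := (posDef_int_iff.1 hB').1.apply 0 1
  refine exists_eq_transpose_mul_self_of_transpose_mul_mul (M := M)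
    (N := !![1, B' 0 1; 0, 1]) (by simp [hMdet]) ?_
  rw [det_fin_two, h00, hsymm] at hdet'
  change B' = _
  ext i j; fin_cases i <;> fin_cases j <;> simp [mul_apply, h00, hsymm]
  linarith

theorem apply_zero_zero_eq_one_of_forall_le {A : Matrix (Fin 3) (Fin 3) ℤ} (hA : A.IsSymm)
    (hpos : 0 < A 0 0) (hmin : ∀ w ≠ 0, A 0 0 ≤ w ⬝ᵥ A *ᵥ w) (hdet : A.det = 1) :
    A 0 0 = 1 := by
  set a := A 0 0
  -- `G / a` is the form induced on the projection of `ℤ³` orthogonal to `e₀` (complete the square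
  -- in the first coordinate). Hermite's bound for `G` yields `27 a⁴ ≤ 64 a`.
  let G : Matrix (Fin 2) (Fin 2) ℤ :=
    !![a * A 1 1 - A 0 1 ^ 2, a * A 1 2 - A 0 1 * A 0 2;
      a * A 1 2 - A 0 1 * A 0 2, a * A 2 2 - A 0 2 ^ 2]
  have hG : ∀ x (w : Fin 2 → ℤ), w ⬝ᵥ G *ᵥ w =
      a * (vecCons x w ⬝ᵥ A *ᵥ vecCons x w) - (a * x + A 0 1 * w 0 + A 0 2 * w 1) ^ 2 := by
    intro x w
    simp [G, dotProduct, mulVec, Fin.sum_univ_succ, hA.apply 0 1, hA.apply 0 2, hA.apply 1 2]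
    ring
  have hlow : ∀ w ≠ 0, 3 * a ^ 2 ≤ 4 * (w ⬝ᵥ G *ᵥ w) := by
    intro w hw
    obtain ⟨x, hx⟩ := Int.exists_two_mul_abs_mul_add_le hpos (A 0 1 * w 0 + A 0 2 * w 1)
    have h := hmin (vecCons x w) (cons_nonzero_iff.2 (Or.inr hw))
    have hsq : (2 * (a * x + A 0 1 * w 0 + A 0 2 * w 1)) ^ 2 ≤ a ^ 2 := by
      rw [← sq_abs, abs_mul, abs_two, add_assoc]; exact pow_le_pow_left₀ (by positivity) hx 2
    rw [hG x]
    nlinarith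
  have hGpos : G.PosDef := posDef_int_iff.2
    ⟨by ext i j; fin_cases i <;> fin_cases j <;> rfl, fun w hw ↦ by nlinarith [hlow w hw]⟩
  have hdetG : G.det = a := by
    simp [G, det_fin_two, det_fin_three, hA.apply 0 1, hA.apply 0 2, hA.apply 1 2] at hdet ⊢
    linear_combination a * hdet
  obtain ⟨M, hM, hle⟩ := hGpos.exists_det_eq_one_three_mul_sq_le_fin_two
  have hcol : Mᵀ 0 ≠ 0 := fun h ↦ by
    simpa [hM] using det_eq_zero_of_row_eq_zero (A := Mᵀ) 0 fun j ↦ congrFun h j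
  have hGw := hlow _ hcol
  rw [transpose_mul_mul_apply_self, hdetG] at hle
  have h4 : 27 * a ^ 4 ≤ 64 * a := by
    nlinarith [mul_le_mul hGw hGw (by positivity) (by nlinarith)]
  have h3 : a ^ 3 ≤ 2 := by nlinarith
  nlinarith

theorem PosDef.exists_eq_transpose_mul_self_of_apply_zero_zero_eq_one
    {A : Matrix (Fin 3) (Fin 3) ℤ} (hA : A.PosDef) (h00 : A 0 0 = 1) (hdet : A.det = 1) :
    ∃ N : Matrix (Fin 3) (Fin 3) ℤ, A = Nᵀ * N := by
  have hs := (posDef_int_iff.1 hA).1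
  let B : Matrix (Fin 2) (Fin 2) ℤ :=
    !![A 1 1 - A 0 1 ^ 2, A 1 2 - A 0 1 * A 0 2; A 1 2 - A 0 1 * A 0 2, A 2 2 - A 0 2 ^ 2]
  have hB : ∀ w : Fin 2 → ℤ, let x := -(A 0 1 * w 0 + A 0 2 * w 1)
      w ⬝ᵥ B *ᵥ w = vecCons x w ⬝ᵥ A *ᵥ vecCons x w := by
    intro w x
    simp [x, B, dotProduct, mulVec, Fin.sum_univ_succ, h00, hs.apply 0 1, hs.apply 0 2,
      hs.apply 1 2]
    ring
  have hBpos : B.PosDef := posDef_int_iff.2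
    ⟨by ext i j; fin_cases i <;> fin_cases j <;> rfl, fun w hw ↦ by
      rw [hB]; exact hA.dotProduct_mulVec_pos_int (cons_nonzero_iff.2 (Or.inr hw))⟩
  have hBdet : B.det = 1 := by
    simp [B, det_fin_two, det_fin_three, h00, hs.apply 0 1, hs.apply 0 2,
      hs.apply 1 2] at hdet ⊢
    linear_combination hdet
  obtain ⟨K, hK⟩ := hBpos.exists_eq_transpose_mul_self_fin_two hBdet
  have hK' : ∀ i j, B i j = ∑ k, K k i * K k j := fun i j ↦ by rw [hK]; simp [mul_apply]
  have e00 := hK' 0 0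
  have e01 := hK' 0 1
  have e11 := hK' 1 1
  simp only [B, of_apply, cons_val', cons_val_zero, cons_val_one, cons_val_fin_one,
    Fin.sum_univ_two] at e00 e01 e11
  refine ⟨!![1, A 0 1, A 0 2; 0, K 0 0, K 0 1; 0, K 1 0, K 1 1], ?_⟩
  ext i j
  fin_cases i <;> fin_cases j <;>
    simp [mul_apply, Fin.sum_univ_three, h00, hs.apply 0 1, hs.apply 0 2, hs.apply 1 2] <;>
    linarith

theorem PosDef.exists_eq_transpose_mul_self_fin_three {A : Matrix (Fin 3) (Fin 3) ℤ}
    (hA : A.PosDef) (hdet : A.det = 1) : ∃ N : Matrix (Fin 3) (Fin 3) ℤ, A = Nᵀ * N := by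
  obtain ⟨M, hMdet, hmin⟩ :=
    hA.exists_det_eq_one_forall_le 0 fun _ hv ↦ hv.exists_det_eq_one_fin_three
  have hA' := hA.transpose_mul_mul_int (M := M) (by simp [hMdet])
  have hdet' : (Mᵀ * A * M).det = 1 := by simp [det_mul, hMdet, hdet]
  have h00 :=
    apply_zero_zero_eq_one_of_forall_le (posDef_int_iff.1 hA').1 hA'.diag_pos hmin hdet'
  obtain ⟨N, hN⟩ := hA'.exists_eq_transpose_mul_self_of_apply_zero_zero_eq_one h00 hdet'
  exact exists_eq_transpose_mul_self_of_transpose_mul_mul (by simp [hMdet]) hN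

theorem PosDef.exists_sq_add_sq_add_sq_eq {A : Matrix (Fin 3) (Fin 3) ℤ} (hA : A.PosDef)
    (hdet : A.det = 1) (v : Fin 3 → ℤ) : ∃ x y z : ℤ, x ^ 2 + y ^ 2 + z ^ 2 = v ⬝ᵥ A *ᵥ v := by
  obtain ⟨N, rfl⟩ := hA.exists_eq_transpose_mul_self_fin_three hdet
  refine ⟨(N *ᵥ v) 0, (N *ᵥ v) 1, (N *ᵥ v) 2, ?_⟩
  rw [← mulVec_mulVec, dotProduct_mulVec, vecMul_transpose]
  simp [dotProduct, Fin.sum_univ_three, sq]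

end Matrix

open scoped NumberTheorySymbols

theorem jacobiSym_neg_mul_eq_one {q E : ℕ} {d m : ℤ} (hq : q % 4 = 1) (hE : E % 4 = 1)
    (hd : J(-d | q) = 1) (hm : J(m | E) = 1) (hmq : m * q ≡ -1 [ZMOD E]) :
    J(-(d * E) | q) = 1 := by
  have hEodd : Odd E := Nat.odd_iff.2 (by omega)
  have hqE : J(q | E) = 1 := by
    have := jacobiSym.mod_left' hmq
    rwa [jacobiSym.mul_left, hm, one_mul, jacobiSym.at_neg_one hEodd,
      ZMod.χ₄_nat_one_mod_four hE] at this
  rw [neg_mul_eq_neg_mul, jacobiSym.mul_left, hd,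
    jacobiSym.quadratic_reciprocity_one_mod_four' hEodd hq, hqE, one_mul]

theorem exists_dvd_sq_add_of_jacobiSym_eq_one {q : ℕ} [Fact q.Prime] {D : ℤ}
    (h : J(-D | q) = 1) : ∃ b : ℤ, (q : ℤ) ∣ b ^ 2 + D := by
  obtain ⟨r, hr⟩ := ZMod.isSquare_of_jacobiSym_eq_one h
  obtain ⟨b, rfl⟩ := ZMod.intCast_surjective r
  refine ⟨b, (ZMod.intCast_zmod_eq_zero_iff_dvd _ q).1 ?_⟩
  push_cast at hr ⊢
  rw [sq, ← hr]
  ring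

theorem exists_two_mul_dvd_sq_add {q D b : ℤ} (hq : Odd q) (hD : Odd D) (h : q ∣ b ^ 2 + D) :
    ∃ b' : ℤ, 2 * q ∣ b' ^ 2 + D := by
  obtain ⟨b', hodd, hdvd⟩ : ∃ b', Odd b' ∧ q ∣ b' ^ 2 + D := by
    rcases Int.even_or_odd b with hb | hb
    · refine ⟨b + q, hb.add_odd hq, ?_⟩
      rw [show (b + q) ^ 2 + D = b ^ 2 + D + q * (2 * b + q) by ring]
      exact dvd_add h (dvd_mul_right _ _)
    · exact ⟨b, hb, h⟩
  have hcop : IsCoprime 2 q := by obtain ⟨j, rfl⟩ := hq; exact ⟨-j, 1, by ring⟩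
  exact ⟨b', hcop.mul_dvd (even_iff_two_dvd.1 (hodd.pow.add_odd hD)) hdvd⟩

theorem Int.exists_nat_eq_add_mul_of_modEq {q a M : ℤ} (h : q ≡ a [ZMOD M]) (hM : 0 < M)
    (hq : 0 ≤ q) (ha : a < M) : ∃ k : ℕ, q = a + M * k := by
  obtain ⟨j, hj⟩ := (Int.modEq_iff_dvd.1 h.symm)
  have hj0 : 0 ≤ j := by
    by_contra! hneg
    nlinarith [mul_le_mul_of_nonneg_left (show j ≤ -1 by omega) hM.le]
  lift j to ℕ using hj0
  exact ⟨j, by linarith⟩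

theorem exists_prime_eq_add_mul {a M : ℤ} (hM : 0 < M) (haM : a < M) (hcop : IsCoprime a M) :
    ∃ q : ℕ, q.Prime ∧ ∃ k : ℕ, (q : ℤ) = a + M * k := by
  lift M to ℕ using hM.le
  obtain ⟨q, -, hq, hmod⟩ := Nat.forall_exists_prime_gt_and_zmodEq 0 (by omega) hcop
  exact ⟨q, hq, Int.exists_nat_eq_add_mul_of_modEq hmod hM (by positivity) haM⟩

/- In each case Dirichlet's theorem provides a prime `q` with `N D - 1 = q` (or `2 q`) for an
explicit `D`, chosen so that quadratic reciprocity makes `-D` a square modulo `q`. -/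
theorem exists_dvd_sq_add_of_four_mul_add_two (l : ℕ) :
    ∃ D b : ℤ, 0 < D ∧ (4 * l + 2) * D - 1 ∣ b ^ 2 + D := by
  obtain ⟨q, hq, k, hk⟩ := exists_prime_eq_add_mul (a := 4 * l + 1) (M := 4 * (4 * l + 2))
    (by positivity) (by linarith) ⟨4 * l + 1, -l, by ring⟩
  have := Fact.mk hq
  have hq4 : q % 4 = 1 := by
    obtain ⟨j, hj⟩ : ∃ j : ℤ, (q : ℤ) = 4 * j + 1 := ⟨l + (4 * l + 2) * k, by rw [hk]; ring⟩
    omega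
  have hJ : J(-(1 * (1 + 4 * k : ℕ)) | q) = 1 := by
    refine jacobiSym_neg_mul_eq_one hq4 (by omega) ?_ (jacobiSym.one_left _) ?_
    · rw [jacobiSym.at_neg_one (hq.odd_of_ne_two (by omega)), ZMod.χ₄_nat_one_mod_four hq4]
    · rw [Int.modEq_iff_dvd]
      exact ⟨-(4 * l + 2), by push_cast; linear_combination -hk⟩
  obtain ⟨b, hb⟩ := exists_dvd_sq_add_of_jacobiSym_eq_one hJ
  refine ⟨1 + 4 * k, b, by positivity, ?_⟩
  rw [show (4 * l + 2) * (1 + 4 * k) - 1 = (q : ℤ) by rw [hk]; ring]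
  simpa using hb

theorem exists_dvd_sq_add_of_four_mul_add_one (l : ℕ) :
    ∃ D b : ℤ, 0 < D ∧ (4 * l + 1) * D - 1 ∣ b ^ 2 + D := by
  obtain ⟨q, hq, k, hk⟩ := exists_prime_eq_add_mul (a := 8 * l + 1) (M := 8 * (4 * l + 1))
    (by positivity) (by linarith) ⟨8 * l + 1, -2 * l, by ring⟩
  have := Fact.mk hq
  have hq8 : q % 8 = 1 := by
    obtain ⟨j, hj⟩ : ∃ j : ℤ, (q : ℤ) = 8 * j + 1 := ⟨l + (4 * l + 1) * k, by rw [hk]; ring⟩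
    omega
  have hJ : J(-(2 * (1 + 4 * k : ℕ)) | q) = 1 := by
    refine jacobiSym_neg_mul_eq_one (by omega) (by omega) ?_ (jacobiSym.one_left _) ?_
    · rw [jacobiSym.at_neg_two (hq.odd_of_ne_two (by omega)), ZMod.χ₈'_nat_eq_if_mod_eight]
      simp [hq8, show q % 2 = 1 by omega]
    · rw [Int.modEq_iff_dvd]
      exact ⟨-(2 * (4 * l + 1)), by push_cast; linear_combination -hk⟩
  obtain ⟨b, hb⟩ := exists_dvd_sq_add_of_jacobiSym_eq_one hJ
  refine ⟨2 * (1 + 4 * k), b, by positivity, ?_⟩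
  rw [show (4 * l + 1) * (2 * (1 + 4 * k)) - 1 = (q : ℤ) by rw [hk]; ring]
  simpa using hb

theorem exists_dvd_sq_add_of_eight_mul_add_three (l : ℕ) :
    ∃ D b : ℤ, 0 < D ∧ (8 * l + 3) * D - 1 ∣ b ^ 2 + D := by
  obtain ⟨q, hq, k, hk⟩ := exists_prime_eq_add_mul (a := 4 * l + 1) (M := 4 * (8 * l + 3))
    (by positivity) (by linarith) ⟨8 * l + 1, -l, by ring⟩
  have := Fact.mk hq
  have hq4 : q % 4 = 1 := by
    obtain ⟨j, hj⟩ : ∃ j : ℤ, (q : ℤ) = 4 * j + 1 := ⟨l + (8 * l + 3) * k, by rw [hk]; ring⟩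
    omega
  have hJ : J(-(1 * (1 + 8 * k : ℕ)) | q) = 1 := by
    refine jacobiSym_neg_mul_eq_one (m := 2) hq4 (by omega) ?_ ?_ ?_
    · rw [jacobiSym.at_neg_one (hq.odd_of_ne_two (by omega)), ZMod.χ₄_nat_one_mod_four hq4]
    · rw [jacobiSym.at_two (Nat.odd_iff.2 (by omega)), ZMod.χ₈_nat_eq_if_mod_eight]
      simp [show (1 + 8 * k) % 8 = 1 by omega, show (1 + 8 * k) % 2 = 1 by omega]
    · rw [Int.modEq_iff_dvd]
      exact ⟨-(8 * l + 3), by push_cast; linear_combination -2 * hk⟩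
  obtain ⟨b, hb⟩ := exists_dvd_sq_add_of_jacobiSym_eq_one hJ
  obtain ⟨b', hb'⟩ := exists_two_mul_dvd_sq_add (q := q) (D := 1 + 8 * k)
    (by exact_mod_cast hq.odd_of_ne_two (by omega)) ⟨4 * k, by ring⟩ (by simpa using hb)
  refine ⟨1 + 8 * k, b', by positivity, ?_⟩
  rwa [show (8 * l + 3) * (1 + 8 * k) - 1 = 2 * (q : ℤ) by rw [hk]; ring]

theorem exists_dvd_sq_add {N : ℕ} (h4 : ¬ 4 ∣ N) (h7 : N % 8 ≠ 7) :
    ∃ D b : ℤ, 0 < D ∧ N * D - 1 ∣ b ^ 2 + D := by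
  rcases (by omega : N % 4 = 2 ∨ N % 4 = 1 ∨ N % 8 = 3) with h | h | h
  · obtain ⟨l, rfl⟩ : ∃ l, N = 4 * l + 2 := ⟨N / 4, by omega⟩
    exact_mod_cast exists_dvd_sq_add_of_four_mul_add_two l
  · obtain ⟨l, rfl⟩ : ∃ l, N = 4 * l + 1 := ⟨N / 4, by omega⟩
    exact_mod_cast exists_dvd_sq_add_of_four_mul_add_one l
  · obtain ⟨l, rfl⟩ : ∃ l, N = 8 * l + 3 := ⟨N / 8, by omega⟩
    exact_mod_cast exists_dvd_sq_add_of_eight_mul_add_three l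

theorem exists_sq_add_sq_add_sq_of_dvd_sq_add {n D b : ℤ} (hn : 2 ≤ n) (hD : 0 < D)
    (h : n * D - 1 ∣ b ^ 2 + D) : ∃ x y z : ℤ, x ^ 2 + y ^ 2 + z ^ 2 = n := by
  obtain ⟨a, ha⟩ := h
  have hc : 0 < n * D - 1 := by nlinarith
  have ha0 : 0 < a := pos_of_mul_pos_right (ha ▸ (by positivity : 0 < b ^ 2 + D)) hc.le
  have hna : 0 < n * a - 1 := by nlinarith
  let A : Matrix (Fin 3) (Fin 3) ℤ := !![n, 1, 0; 1, a, b; 0, b, n * D - 1]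
  have hdet : A.det = 1 := by
    simp [A, det_fin_three]
    linear_combination -n * ha
  -- Complete the square in `v 0`, then in `v 1`.
  have hval : ∀ v : Fin 3 → ℤ, n * (n * a - 1) * (v ⬝ᵥ A *ᵥ v) =
      (n * a - 1) * (n * v 0 + v 1) ^ 2 + ((n * a - 1) * v 1 + n * b * v 2) ^ 2 + n * v 2 ^ 2 := by
    intro v
    simp [A, dotProduct, mulVec, Fin.sum_univ_three]
    linear_combination -n ^ 2 * v 2 ^ 2 * ha
  have hA : A.PosDef := by
    refine posDef_int_iff.2 ⟨by ext i j; fin_cases i <;> fin_cases j <;> rfl, fun v hv ↦ ?_⟩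
    by_contra! hle
    have hprod : n * (n * a - 1) * (v ⬝ᵥ A *ᵥ v) ≤ 0 :=
      mul_nonpos_of_nonneg_of_nonpos (by positivity) hle
    rw [hval] at hprod
    have h₀ : 0 ≤ (n * a - 1) * (n * v 0 + v 1) ^ 2 := by positivity
    have h₁ := sq_nonneg ((n * a - 1) * v 1 + n * b * v 2)
    have h₂ : 0 ≤ n * v 2 ^ 2 := by positivity
    have e₂ : v 2 = 0 := by simpa [show n ≠ 0 by omega] using (by linarith : n * v 2 ^ 2 = 0)
    have e₁ : v 1 = 0 := by
      simpa [e₂, hna.ne'] using (by linarith : ((n * a - 1) * v 1 + n * b * v 2) ^ 2 = 0)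
    have e₀ : v 0 = 0 := by
      simpa [e₁, hna.ne', show n ≠ 0 by omega] using
        (by linarith : (n * a - 1) * (n * v 0 + v 1) ^ 2 = 0)
    exact hv (by ext i; fin_cases i <;> assumption)
  obtain ⟨x, y, z, hxyz⟩ := hA.exists_sq_add_sq_add_sq_eq hdet ![1, 0, 0]
  exact ⟨x, y, z, by simpa [A, dotProduct, mulVec, Fin.sum_univ_three] using hxyz⟩

theorem Int.sq_emod_four_eq_emod_two (x : ℤ) : x ^ 2 % 4 = x % 2 := by
  rcases Int.even_or_odd' x with ⟨k, rfl | rfl⟩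
  · rw [show (2 * k) ^ 2 = 4 * k ^ 2 by ring]; omega
  · rw [show (2 * k + 1) ^ 2 = 4 * (k ^ 2 + k) + 1 by ring]; omega

theorem sq_add_sq_add_sq_ne (x y z : ℤ) (s t : ℕ) :
    x ^ 2 + y ^ 2 + z ^ 2 ≠ 4 ^ s * (8 * t + 7) := by
  induction s generalizing x y z with
  | zero =>
    intro h
    have hmod8 : ∀ a b c : ZMod 8, a ^ 2 + b ^ 2 + c ^ 2 ≠ 7 := by decide
    refine hmod8 x y z ?_
    have := congrArg (Int.cast : ℤ → ZMod 8) h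
    push_cast at this
    rw [this, show (8 : ZMod 8) = 0 from rfl]
    ring
  | succ s ih =>
    intro h
    have hx := Int.sq_emod_four_eq_emod_two x
    have hy := Int.sq_emod_four_eq_emod_two y
    have hz := Int.sq_emod_four_eq_emod_two z
    have h4 : (x ^ 2 + y ^ 2 + z ^ 2) % 4 = 0 := by
      rw [h, pow_succ, mul_comm _ 4, mul_assoc, Int.mul_emod_right]
    obtain ⟨x', rfl⟩ : 2 ∣ x := by omega
    obtain ⟨y', rfl⟩ : 2 ∣ y := by omega
    obtain ⟨z', rfl⟩ : 2 ∣ z := by omega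
    exact ih x' y' z' (by rw [pow_succ 4 s] at h; linarith)

theorem exists_sq_add_sq_add_sq_of_forall_ne (N : ℕ)
    (h : ∀ s t : ℕ, (N : ℤ) ≠ 4 ^ s * (8 * t + 7)) : ∃ x y z : ℤ, x ^ 2 + y ^ 2 + z ^ 2 = N := by
  induction N using Nat.strong_induction_on with
  | _ N ih =>
  rcases Nat.lt_or_ge N 2 with hN | hN
  · interval_cases N
    exacts [⟨0, 0, 0, by norm_num⟩, ⟨1, 0, 0, by norm_num⟩]
  by_cases h4 : 4 ∣ N
  · obtain ⟨M, rfl⟩ := h4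
    obtain ⟨x, y, z, hxyz⟩ :=
      ih M (by omega) fun s t hst ↦ h (s + 1) t (by push_cast; rw [hst]; ring)
    exact ⟨2 * x, 2 * y, 2 * z, by push_cast; linear_combination 4 * hxyz⟩
  · obtain ⟨D, b, hD, hdvd⟩ :=
      exists_dvd_sq_add h4 fun h7 ↦ h 0 (N / 8) (by rw [pow_zero, one_mul]; omega)
    exact exists_sq_add_sq_add_sq_of_dvd_sq_add (by exact_mod_cast hN) hD hdvd

theorem exists_sq_add_sq_add_sq_iff {n : ℤ} (hn : 0 ≤ n) :
    (∃ x y z : ℤ, x ^ 2 + y ^ 2 + z ^ 2 = n) ↔ ¬ ∃ s t : ℕ, n = 4 ^ s * (8 * t + 7) := by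
  refine ⟨fun ⟨x, y, z, h⟩ ⟨s, t, hst⟩ ↦ sq_add_sq_add_sq_ne x y z s t (h.trans hst), fun h ↦ ?_⟩
  lift n to ℕ using hn
  exact exists_sq_add_sq_add_sq_of_forall_ne n fun s t hst ↦ h ⟨s, t, hst⟩

theorem exists_sq_add_sq_add_two_mul_sq_of_even {u v w m : ℤ} (huv : (u + v) % 2 = 0)
    (hw : w % 2 = 0) (h : u ^ 2 + v ^ 2 + w ^ 2 = 2 * m) :
    ∃ x y z : ℤ, x ^ 2 + y ^ 2 + 2 * z ^ 2 = m := by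
  obtain ⟨x, hx⟩ : 2 ∣ u + v := by omega
  obtain ⟨y, hy⟩ : 2 ∣ u - v := by omega
  obtain ⟨z, rfl⟩ : 2 ∣ w := by omega
  obtain rfl : u = x + y := by omega
  obtain rfl : v = x - y := by omega
  exact ⟨x, y, z, by linarith⟩

theorem exists_sq_add_sq_add_two_mul_sq_iff_two_mul (m : ℤ) :
    (∃ x y z : ℤ, x ^ 2 + y ^ 2 + 2 * z ^ 2 = m) ↔
      ∃ a b c : ℤ, a ^ 2 + b ^ 2 + c ^ 2 = 2 * m := by
  refine ⟨fun ⟨x, y, z, h⟩ ↦ ⟨x + y, x - y, 2 * z, by rw [← h]; ring⟩, fun ⟨a, b, c, h⟩ ↦ ?_⟩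
  have ha := Int.sq_emod_four_eq_emod_two a
  have hb := Int.sq_emod_four_eq_emod_two b
  have hc := Int.sq_emod_four_eq_emod_two c
  rcases (by omega : (a + b) % 2 = 0 ∧ c % 2 = 0 ∨ (a + c) % 2 = 0 ∧ b % 2 = 0 ∨
      (b + c) % 2 = 0 ∧ a % 2 = 0) with ⟨h₁, h₂⟩ | ⟨h₁, h₂⟩ | ⟨h₁, h₂⟩
  · exact exists_sq_add_sq_add_two_mul_sq_of_even h₁ h₂ h
  · exact exists_sq_add_sq_add_two_mul_sq_of_even h₁ h₂ (by linarith)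
  · exact exists_sq_add_sq_add_two_mul_sq_of_even h₁ h₂ (by linarith)

theorem exists_sq_add_sq_add_two_mul_sq_iff {m : ℤ} (hm : 0 ≤ m) :
    (∃ x y z : ℤ, x ^ 2 + y ^ 2 + 2 * z ^ 2 = m) ↔ ¬ ∃ s t : ℕ, m = 4 ^ s * (16 * t + 14) := by
  rw [exists_sq_add_sq_add_two_mul_sq_iff_two_mul, exists_sq_add_sq_add_sq_iff (by linarith)]
  refine not_congr ⟨fun ⟨s, t, h⟩ ↦ ?_, fun ⟨s, t, h⟩ ↦ ⟨s + 1, t, by rw [h]; ring⟩⟩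
  cases s with
  | zero => omega
  | succ s => exact ⟨s, t, by rw [pow_succ] at h; linarith⟩

theorem stmt18 (n : ℤ) (hn : 0 ≤ n) :
    (∃ x y z : ℤ, 3*x^2 + 3*y^2 + 6*z^2 = n) ↔
    (3 ∣ n ∧ ¬ ∃ s t : ℕ, n = 6 * 4^s * (8*t + 7)) := by
  constructor
  · rintro ⟨x, y, z, rfl⟩
    refine ⟨⟨x ^ 2 + y ^ 2 + 2 * z ^ 2, by ring⟩, fun ⟨s, t, h⟩ ↦ ?_⟩
    exact (exists_sq_add_sq_add_two_mul_sq_iff (by positivity)).1 ⟨x, y, z, rfl⟩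
      ⟨s, t, by linarith⟩
  · rintro ⟨⟨m, rfl⟩, h⟩
    obtain ⟨x, y, z, hm⟩ := (exists_sq_add_sq_add_two_mul_sq_iff (by linarith)).2
      fun ⟨s, t, (hst : m = _)⟩ ↦ h ⟨s, t, by rw [hst]; ring⟩
    exact ⟨x, y, z, by rw [← hm]; ring⟩
end
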